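/- Let n ≥ 1, let p ∈ ℝ, and let {(q_i, U_i)}_{i∈I} be a finite ensemble of 2^n × 2^n unitary matrices U_i with probabilities q_i ≥ 0, Σ_i q_i = 1, which is Pauli mixing in the following sense: for every i there exist a permutation π_i of the non-identity Pauli strings and a sign function ε_i into {+1, −1} such that U_i P U_i† = ε_i(P) · π_i(P) for every non-identity Pauli string P, and for all non-identity Pauli strings P, Q one has Σ_{i : π_i(P) = Q} q_i = 1/(4^n − 1). Then for every n-qubit density matrix ρ (Hermitian, positive semidefinite, trace 1), the expected purity of the ensemble after one layer of local depolarizing noise satisfies exactly: Σ_i q_i · Tr( (D_p^{⊗n}(U_i ρ U_i†))² ) = 2^{−n} + (Tr(ρ²) − 2^{−n}) · (1/(4^n − 1)) · Σ_{k=1}^{n} C(n,k) · 3^k · p^{2k}. -/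

import Mathlib

open Matrix BigOperators
open scoped ComplexOrder

noncomputable section

/-- The four single-qubit Pauli matrices: σ₀ = I, σ₁ = X, σ₂ = Y, σ₃ = Z. -/
def pauli : Fin 4 → Matrix (Fin 2) (Fin 2) ℂ :=
  ![1, !![0, 1; 1, 0], !![0, -Complex.I; Complex.I, 0], !![1, 0; 0, -1]]

/-- The 2^n × 2^n matrix associated to a Pauli string `P : Fin n → Fin 4`,
given by the n-fold Kronecker product ⊗ᵢ σ_{P i}. -/
def pauliMatrix {n : ℕ} (P : Fin n → Fin 4) :
    Matrix (Fin n → Fin 2) (Fin n → Fin 2) ℂ :=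
  Matrix.of fun x y => ∏ i, pauli (P i) (x i) (y i)

/-- The weight of a Pauli string: the number of sites acted on nontrivially. -/
def pweight {n : ℕ} (P : Fin n → Fin 4) : ℕ :=
  (Finset.univ.filter fun i => P i ≠ 0).card

/-- The single-qubit depolarizing channel `D_p` acting on qubit `i` of an n-qubit matrix:
`M ↦ p·M + (1-p)·Tr_i(M) ⊗ (I/2)_i`, written entrywise. -/
def depolSite {n : ℕ} (p : ℝ) (i : Fin n)
    (M : Matrix (Fin n → Fin 2) (Fin n → Fin 2) ℂ) :
    Matrix (Fin n → Fin 2) (Fin n → Fin 2) ℂ :=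
  Matrix.of fun x y =>
    (p : ℂ) * M x y +
      ((1 - p : ℝ) : ℂ) *
        (if x i = y i then
          (2 : ℂ)⁻¹ * ∑ v : Fin 2, M (Function.update x i v) (Function.update y i v)
        else 0)

/-- The n-fold local depolarizing channel `D_p^{⊗n}`, i.e. the (commuting) composition of the
single-qubit depolarizing channels on each of the n sites.  It is the unique linear map with
`D_p^{⊗n}(M₁ ⊗ ⋯ ⊗ Mₙ) = D_p(M₁) ⊗ ⋯ ⊗ D_p(Mₙ)`. -/
def depolN {n : ℕ} (p : ℝ)
    (M : Matrix (Fin n → Fin 2) (Fin n → Fin 2) ℂ) :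
    Matrix (Fin n → Fin 2) (Fin n → Fin 2) ℂ :=
  (List.finRange n).foldr (fun i acc => depolSite p i acc) M

/-!
Expand matrices in the Pauli basis, `2ⁿ M = ∑_P c_P(M) P` with `c_P(M) = Tr(P M)`. The channel
`D_p^{⊗n}` multiplies the string `P` by `p^{w(P)}`, so by Parseval
`2ⁿ Tr((D_p^{⊗n} M)²) = ∑_P p^{2 w(P)} c_P(M)²`. For `M = Uᵢ ρ Uᵢ†` the identity coefficient is
`Tr ρ = 1`, and the others are those of `ρ`, permuted by `πᵢ` up to sign. Averaging over the
ensemble, Pauli mixing spreads the squared coefficients evenly, so each becomes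
`(2ⁿ Tr ρ² − 1)/(4ⁿ − 1)`; what remains is the weight enumerator
`∑_{P ≠ 0} x^{w(P)} = (1 + 3x)ⁿ − 1` at `x = p²`.
-/

section KroneckerPi

variable {ι κ R : Type*} [Fintype ι] [CommSemiring R]

def kroneckerPi (A : ι → Matrix κ κ R) : Matrix (ι → κ) (ι → κ) R :=
  of fun x y => ∏ i, A i (x i) (y i)

lemma kroneckerPi_mul [DecidableEq ι] [Fintype κ] (A B : ι → Matrix κ κ R) :
    kroneckerPi A * kroneckerPi B = kroneckerPi fun i => A i * B i := by
  ext x y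
  simp only [kroneckerPi, mul_apply, of_apply, Fintype.prod_sum, Finset.prod_mul_distrib]

lemma trace_kroneckerPi [DecidableEq ι] [Fintype κ] (A : ι → Matrix κ κ R) :
    (kroneckerPi A).trace = ∏ i, (A i).trace := by
  simp only [trace, diag, kroneckerPi, of_apply, Fintype.prod_sum]

lemma kroneckerPi_one [DecidableEq κ] : kroneckerPi (fun _ : ι => (1 : Matrix κ κ R)) = 1 := by
  ext x y
  simp [kroneckerPi, one_apply, Finset.prod_ite_zero, funext_iff]

lemma kroneckerPi_update_smul [DecidableEq ι] (A : ι → Matrix κ κ R) (i : ι) (c : R) :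
    kroneckerPi (Function.update A i (c • A i)) = c • kroneckerPi A := by
  ext x y
  simp only [kroneckerPi, of_apply, Matrix.smul_apply, Fintype.prod_eq_mul_prod_subtype_ne _ i,
    Function.update_self, smul_eq_mul, mul_assoc]
  congr 2
  exact Finset.prod_congr rfl fun j _ => by rw [Function.update_of_ne j.2]

end KroneckerPi

section Unitary

variable {m : Type*} [Fintype m] [DecidableEq m] {U : Matrix m m ℂ}

lemma conjTranspose_mul_self_of_mem_unitaryGroup (hU : U ∈ unitaryGroup m ℂ) : Uᴴ * U = 1 :=
  Unitary.star_mul_self_of_mem hU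

lemma trace_conj_unitary (hU : U ∈ unitaryGroup m ℂ) (A : Matrix m m ℂ) :
    (U * A * Uᴴ).trace = A.trace := by
  rw [trace_mul_comm, ← Matrix.mul_assoc, conjTranspose_mul_self_of_mem_unitaryGroup hU,
    Matrix.one_mul]

lemma conj_unitary_mul_conj_unitary (hU : U ∈ unitaryGroup m ℂ) (A B : Matrix m m ℂ) :
    (U * A * Uᴴ) * (U * B * Uᴴ) = U * (A * B) * Uᴴ := by
  simp only [Matrix.mul_assoc]
  rw [← Matrix.mul_assoc Uᴴ, conjTranspose_mul_self_of_mem_unitaryGroup hU, Matrix.one_mul]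

end Unitary

lemma sum_mul_apply_perm_symm {ι S R : Type*} [Fintype ι] [Fintype S] [DecidableEq S]
    [CommSemiring R] (q : ι → R) (π : ι → Equiv.Perm S) {c : R}
    (hmix : ∀ P Q, ∑ i ∈ Finset.univ.filter (fun i => π i P = Q), q i = c)
    (f : S → R) (Q : S) :
    ∑ i, q i * f ((π i).symm Q) = c * ∑ P, f P := by
  rw [← Finset.sum_fiberwise Finset.univ (fun i => (π i).symm Q), Finset.mul_sum]
  refine Finset.sum_congr rfl fun P _ => ?_
  have hfiber : Finset.univ.filter (fun i => (π i).symm Q = P)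
      = Finset.univ.filter (fun i => π i P = Q) :=
    Finset.filter_congr fun i _ => (π i).symm_apply_eq.trans eq_comm
  rw [← hmix P Q, Finset.sum_mul, hfiber]
  exact Finset.sum_congr rfl fun i hi => by
    rw [(π i).symm_apply_eq.mpr (Finset.mem_filter.mp hi).2.symm]

section Pauli

variable {n : ℕ}

lemma pauliMatrix_eq_kroneckerPi (P : Fin n → Fin 4) :
    pauliMatrix P = kroneckerPi fun i => pauli (P i) := rfl

lemma pauliMatrix_zero : pauliMatrix (0 : Fin n → Fin 4) = 1 := kroneckerPi_one

lemma trace_pauli_mul_pauli (s t : Fin 4) :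
    (pauli s * pauli t).trace = if s = t then 2 else 0 := by
  fin_cases s <;> fin_cases t <;>
    simp [pauli, trace_fin_two, Complex.I_mul_I] <;> norm_num

lemma sum_pauli_apply_mul_apply (a b c d : Fin 2) :
    ∑ s, pauli s a b * pauli s c d = if a = d ∧ b = c then 2 else 0 := by
  fin_cases a <;> fin_cases b <;> fin_cases c <;> fin_cases d <;>
    simp [pauli, Fin.sum_univ_four, Complex.I_mul_I] <;> norm_num

lemma trace_pauliMatrix_mul_pauliMatrix (P Q : Fin n → Fin 4) :
    (pauliMatrix P * pauliMatrix Q).trace = if P = Q then 2 ^ n else 0 := by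
  simp only [pauliMatrix_eq_kroneckerPi, kroneckerPi_mul, trace_kroneckerPi,
    trace_pauli_mul_pauli, Finset.prod_ite_zero, Finset.mem_univ, true_imp_iff,
    Finset.prod_const, Finset.card_univ, Fintype.card_fin, funext_iff]

lemma sum_pauliMatrix_apply_mul_apply (x y z w : Fin n → Fin 2) :
    ∑ P : Fin n → Fin 4, pauliMatrix P z w * pauliMatrix P x y
      = if z = y ∧ w = x then 2 ^ n else 0 := by
  simp only [pauliMatrix, of_apply, ← Finset.prod_mul_distrib]
  rw [← Fintype.prod_sum fun i s => pauli s (z i) (w i) * pauli s (x i) (y i)]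
  simp only [sum_pauli_apply_mul_apply, Finset.prod_ite_zero, Finset.mem_univ, true_imp_iff,
    Finset.prod_const, Finset.card_univ, Fintype.card_fin, funext_iff, forall_and]

def pauliCoeff (P : Fin n → Fin 4) : Matrix (Fin n → Fin 2) (Fin n → Fin 2) ℂ →ₗ[ℂ] ℂ :=
  traceLinearMap _ ℂ ℂ ∘ₗ LinearMap.mulLeft ℂ (pauliMatrix P)

lemma pauliCoeff_apply (P : Fin n → Fin 4) (M : Matrix (Fin n → Fin 2) (Fin n → Fin 2) ℂ) :
    pauliCoeff P M = (pauliMatrix P * M).trace := rfl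

lemma pauliCoeff_pauliMatrix (P Q : Fin n → Fin 4) :
    pauliCoeff P (pauliMatrix Q) = if P = Q then 2 ^ n else 0 :=
  trace_pauliMatrix_mul_pauliMatrix P Q

lemma pauliCoeff_zero (M : Matrix (Fin n → Fin 2) (Fin n → Fin 2) ℂ) :
    pauliCoeff 0 M = M.trace := by
  rw [pauliCoeff_apply, pauliMatrix_zero, one_mul]

lemma sum_pauliCoeff_smul_pauliMatrix (M : Matrix (Fin n → Fin 2) (Fin n → Fin 2) ℂ) :
    ∑ P, pauliCoeff P M • pauliMatrix P = (2 ^ n : ℂ) • M := by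
  ext x y
  simp only [pauliCoeff_apply, Matrix.sum_apply, Matrix.smul_apply, trace, diag, mul_apply,
    smul_eq_mul, Finset.sum_mul]
  calc _ = ∑ z, ∑ w, M w z * ∑ P : Fin n → Fin 4, pauliMatrix P z w * pauliMatrix P x y := by
        simp only [Finset.mul_sum]
        rw [Finset.sum_comm]
        refine Finset.sum_congr rfl fun z _ => ?_
        rw [Finset.sum_comm]
        exact Finset.sum_congr rfl fun w _ => Finset.sum_congr rfl fun P _ => by ring
    _ = _ := by simp [sum_pauliMatrix_apply_mul_apply, ite_and, mul_comm]

lemma sum_pauliCoeff_mul_pauliCoeff (M N : Matrix (Fin n → Fin 2) (Fin n → Fin 2) ℂ) :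
    ∑ P, pauliCoeff P M * pauliCoeff P N = 2 ^ n * (M * N).trace := by
  have h := congrArg (fun A => (A * N).trace) (sum_pauliCoeff_smul_pauliMatrix M)
  simpa only [Matrix.sum_mul, Matrix.smul_mul, trace_sum, trace_smul, smul_eq_mul,
    pauliCoeff_apply] using h

lemma sum_pauliCoeff_sq_ne_zero (M : Matrix (Fin n → Fin 2) (Fin n → Fin 2) ℂ) :
    ∑ P : {P : Fin n → Fin 4 // P ≠ 0}, pauliCoeff P.1 M ^ 2
      = 2 ^ n * (M * M).trace - M.trace ^ 2 := by
  have h := sum_pauliCoeff_mul_pauliCoeff M M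
  rw [Fintype.sum_eq_add_sum_subtype_ne _ 0, pauliCoeff_zero] at h
  simp_rw [sq]
  linear_combination h

lemma pauliCoeff_conj_unitary {U : Matrix (Fin n → Fin 2) (Fin n → Fin 2) ℂ}
    (hU : U ∈ unitaryGroup (Fin n → Fin 2) ℂ) {P Q : Fin n → Fin 4} {e : ℂ}
    (h : U * pauliMatrix P * Uᴴ = e • pauliMatrix Q)
    (M : Matrix (Fin n → Fin 2) (Fin n → Fin 2) ℂ) :
    e * pauliCoeff Q (U * M * Uᴴ) = pauliCoeff P M := by
  rw [pauliCoeff_apply, pauliCoeff_apply, ← trace_conj_unitary hU (pauliMatrix P * M),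
    ← conj_unitary_mul_conj_unitary hU, h, Matrix.smul_mul, trace_smul, smul_eq_mul]

lemma sum_mul_pauliCoeff_conj_sq {I : Type*} [Fintype I] (q : I → ℂ)
    {U : I → Matrix (Fin n → Fin 2) (Fin n → Fin 2) ℂ}
    (hU : ∀ i, U i ∈ unitaryGroup (Fin n → Fin 2) ℂ)
    {π : I → Equiv.Perm {P : Fin n → Fin 4 // P ≠ 0}} {ε : I → {P : Fin n → Fin 4 // P ≠ 0} → ℝ}
    (hε : ∀ i P, ε i P = 1 ∨ ε i P = -1)
    (hconj : ∀ i (P : {P : Fin n → Fin 4 // P ≠ 0}),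
      U i * pauliMatrix P.1 * (U i)ᴴ = (ε i P : ℂ) • pauliMatrix (π i P).1)
    {c : ℂ} (hmix : ∀ P Q, ∑ i ∈ Finset.univ.filter (fun i => π i P = Q), q i = c)
    (ρ : Matrix (Fin n → Fin 2) (Fin n → Fin 2) ℂ) (Q : {P : Fin n → Fin 4 // P ≠ 0}) :
    ∑ i, q i * pauliCoeff Q.1 (U i * ρ * (U i)ᴴ) ^ 2
      = c * (2 ^ n * (ρ * ρ).trace - ρ.trace ^ 2) := by
  have hcoeff : ∀ i, pauliCoeff Q.1 (U i * ρ * (U i)ᴴ) ^ 2 = pauliCoeff ((π i).symm Q).1 ρ ^ 2 := by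
    intro i
    have h := hconj i ((π i).symm Q)
    rw [Equiv.apply_symm_apply] at h
    rw [← pauliCoeff_conj_unitary (hU i) h]
    rcases hε i ((π i).symm Q) with he | he <;> simp [he]
  simp_rw [hcoeff]
  rw [sum_mul_apply_perm_symm q π hmix (fun P => pauliCoeff P.1 ρ ^ 2), sum_pauliCoeff_sq_ne_zero]

lemma pweight_zero : pweight (0 : Fin n → Fin 4) = 0 := by
  simp [pweight]

lemma pow_pweight {M : Type*} [CommMonoid M] (x : M) (P : Fin n → Fin 4) :
    x ^ pweight P = ∏ i, if P i = 0 then 1 else x := by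
  rw [pweight, ← Finset.prod_const, Finset.prod_filter]
  exact Finset.prod_congr rfl fun i _ => by split_ifs <;> simp_all

lemma sum_pow_pweight {R : Type*} [CommSemiring R] (x : R) :
    ∑ P : Fin n → Fin 4, x ^ pweight P = (1 + 3 * x) ^ n := by
  have h4 : 1 + 3 * x = ∑ s : Fin 4, if s = 0 then 1 else x := by
    simp [Fin.sum_univ_four]; ring
  simp_rw [h4, Fintype.sum_pow, pow_pweight]

lemma sum_pow_pweight_ne_zero {R : Type*} [CommRing R] (x : R) :
    ∑ P : {P : Fin n → Fin 4 // P ≠ 0}, x ^ pweight P.1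
      = ∑ k ∈ Finset.Icc 1 n, (n.choose k : R) * 3 ^ k * x ^ k := by
  have h := sum_pow_pweight (n := n) x
  rw [Fintype.sum_eq_add_sum_subtype_ne _ 0, add_comm 1, add_pow, Finset.sum_range_succ'] at h
  simp only [pweight_zero, pow_zero, one_pow, mul_one, Nat.choose_zero_right, Nat.cast_one] at h
  rw [add_comm 1, add_left_inj] at h
  rw [h, ← Finset.Ico_add_one_right_eq_Icc, Finset.sum_Ico_eq_sum_range, add_tsub_cancel_right]
  exact Finset.sum_congr rfl fun k _ => by rw [add_comm 1 k]; ring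

end Pauli

section Depolarizing

variable {n : ℕ}

def depol (p : ℝ) (M : Matrix (Fin 2) (Fin 2) ℂ) : Matrix (Fin 2) (Fin 2) ℂ :=
  (p : ℂ) • M + (((1 - p : ℝ) : ℂ) * (M.trace / 2)) • 1

lemma depol_pauli (p : ℝ) (s : Fin 4) :
    depol p (pauli s) = (if s = 0 then 1 else (p : ℂ)) • pauli s := by
  ext a b
  fin_cases s <;> fin_cases a <;> fin_cases b <;> simp [depol, pauli, trace_fin_two]

lemma depolSite_kroneckerPi (p : ℝ) (i : Fin n) (A : Fin n → Matrix (Fin 2) (Fin 2) ℂ) :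
    depolSite p i (kroneckerPi A) = kroneckerPi (Function.update A i (depol p (A i))) := by
  ext x y
  have away : ∀ (B : Fin n → Matrix (Fin 2) (Fin 2) ℂ) (x' y' : Fin n → Fin 2),
      (∀ j ≠ i, B j = A j ∧ x' j = x j ∧ y' j = y j) →
        ∏ j : {j // j ≠ i}, B j (x' j) (y' j) = ∏ j : {j // j ≠ i}, A j (x j) (y j) :=
    fun B x' y' h => Finset.prod_congr rfl fun j _ => by
      obtain ⟨hB, hx, hy⟩ := h j j.2
      rw [hB, hx, hy]
  simp only [depolSite, kroneckerPi, of_apply, Fintype.prod_eq_mul_prod_subtype_ne _ i,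
    Function.update_self,
    away (Function.update A i _) x y fun j hj => ⟨Function.update_of_ne hj .., rfl, rfl⟩,
    away A (Function.update x i _) (Function.update y i _)
      fun j hj => ⟨rfl, Function.update_of_ne hj .., Function.update_of_ne hj ..⟩,
    depol, Matrix.add_apply, Matrix.smul_apply, Matrix.one_apply, trace, diag, smul_eq_mul,
    Fin.sum_univ_two]
  split_ifs <;> ring

def depolSiteₗ (p : ℝ) (i : Fin n) :
    Matrix (Fin n → Fin 2) (Fin n → Fin 2) ℂ →ₗ[ℂ] Matrix (Fin n → Fin 2) (Fin n → Fin 2) ℂ where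
  toFun := depolSite p i
  map_add' M N := by
    ext x y
    simp only [depolSite, of_apply, Matrix.add_apply, Finset.sum_add_distrib]
    split_ifs <;> ring
  map_smul' c M := by
    ext x y
    simp only [depolSite, of_apply, Matrix.smul_apply, smul_eq_mul, RingHom.id_apply,
      ← Finset.mul_sum]
    split_ifs <;> ring

def depolNₗ (p : ℝ) :
    Matrix (Fin n → Fin 2) (Fin n → Fin 2) ℂ →ₗ[ℂ] Matrix (Fin n → Fin 2) (Fin n → Fin 2) ℂ where
  toFun := depolN p
  map_add' M N := by
    unfold depolN
    induction List.finRange n with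
    | nil => rfl
    | cons i l ih => simp only [List.foldr_cons, ih]; exact (depolSiteₗ p i).map_add _ _
  map_smul' c M := by
    unfold depolN
    induction List.finRange n with
    | nil => rfl
    | cons i l ih => simp only [List.foldr_cons, ih]; exact (depolSiteₗ p i).map_smul _ _

lemma depolSite_smul (p : ℝ) (i : Fin n) (c : ℂ)
    (M : Matrix (Fin n → Fin 2) (Fin n → Fin 2) ℂ) :
    depolSite p i (c • M) = c • depolSite p i M := (depolSiteₗ p i).map_smul c M

lemma depolN_smul (p : ℝ) (c : ℂ) (M : Matrix (Fin n → Fin 2) (Fin n → Fin 2) ℂ) :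
    depolN p (c • M) = c • depolN p M := (depolNₗ p).map_smul c M

lemma depolN_sum (p : ℝ) {α : Type*} (s : Finset α)
    (f : α → Matrix (Fin n → Fin 2) (Fin n → Fin 2) ℂ) :
    depolN p (∑ a ∈ s, f a) = ∑ a ∈ s, depolN p (f a) := map_sum (depolNₗ p) f s

lemma depolSite_pauliMatrix (p : ℝ) (i : Fin n) (P : Fin n → Fin 4) :
    depolSite p i (pauliMatrix P) = (if P i = 0 then 1 else (p : ℂ)) • pauliMatrix P := by
  rw [pauliMatrix_eq_kroneckerPi, depolSite_kroneckerPi, depol_pauli, kroneckerPi_update_smul]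

lemma depolN_pauliMatrix (p : ℝ) (P : Fin n → Fin 4) :
    depolN p (pauliMatrix P) = (p : ℂ) ^ pweight P • pauliMatrix P := by
  rw [pow_pweight, Fin.prod_univ_def, depolN]
  induction List.finRange n with
  | nil => simp
  | cons i l ih =>
    rw [List.foldr_cons, ih, depolSite_smul, depolSite_pauliMatrix, smul_smul, List.map_cons,
      List.prod_cons, mul_comm]

lemma pauliCoeff_depolN (p : ℝ) (P : Fin n → Fin 4)
    (M : Matrix (Fin n → Fin 2) (Fin n → Fin 2) ℂ) :
    pauliCoeff P (depolN p M) = (p : ℂ) ^ pweight P * pauliCoeff P M := by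
  have h := congrArg (fun A => pauliCoeff P (depolN p A)) (sum_pauliCoeff_smul_pauliMatrix M)
  simp only [depolN_sum, depolN_smul, depolN_pauliMatrix, map_sum, map_smul,
    pauliCoeff_pauliMatrix, smul_eq_mul, mul_ite, mul_zero, Finset.sum_ite_eq,
    Finset.mem_univ, if_true] at h
  exact mul_left_cancel₀ (pow_ne_zero n two_ne_zero) (by linear_combination -h)

lemma two_pow_mul_trace_depolN_mul_self (p : ℝ)
    (M : Matrix (Fin n → Fin 2) (Fin n → Fin 2) ℂ) :
    2 ^ n * (depolN p M * depolN p M).trace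
      = M.trace ^ 2 + ∑ P : {P : Fin n → Fin 4 // P ≠ 0},
          (p : ℂ) ^ (2 * pweight P.1) * pauliCoeff P.1 M ^ 2 := by
  rw [← sum_pauliCoeff_mul_pauliCoeff, Fintype.sum_eq_add_sum_subtype_ne _ 0]
  simp only [pauliCoeff_depolN, pauliCoeff_zero, pweight_zero, pow_zero, one_mul, sq]
  congr 1
  exact Finset.sum_congr rfl fun P _ => by rw [pow_mul']; ring

end Depolarizing

theorem expected_purity_pauli_mixing_ensemble_general
    {n : ℕ} (p : ℝ) {I : Type} [Fintype I]
    (q : I → ℝ) (U : I → Matrix (Fin n → Fin 2) (Fin n → Fin 2) ℂ)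
    (hqsum : ∑ i, q i = 1)
    (hU : ∀ i, U i ∈ Matrix.unitaryGroup (Fin n → Fin 2) ℂ)
    -- Pauli mixing: each Uᵢ conjugates every non-identity Pauli string to a signed
    -- non-identity Pauli string via a permutation πᵢ and signs εᵢ ∈ {±1}, ...
    (π : I → Equiv.Perm {P : Fin n → Fin 4 // P ≠ 0})
    (ε : I → {P : Fin n → Fin 4 // P ≠ 0} → ℝ)
    (hε : ∀ i P, ε i P = 1 ∨ ε i P = -1)
    (hconj : ∀ i (P : {P : Fin n → Fin 4 // P ≠ 0}),
      U i * pauliMatrix P.1 * (U i)ᴴ = (ε i P : ℂ) • pauliMatrix ((π i) P).1)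
    -- ... and each non-identity Pauli is mapped to each non-identity Pauli with total
    -- probability 1/(4^n − 1).
    (hmix : ∀ P Q : {P : Fin n → Fin 4 // P ≠ 0},
      ∑ i ∈ Finset.univ.filter (fun i => π i P = Q), q i = 1 / (4 ^ n - 1))
    -- ρ is an n-qubit density matrix:
    (ρ : Matrix (Fin n → Fin 2) (Fin n → Fin 2) ℂ)
    (htr : ρ.trace = 1) :
    ∑ i, (q i : ℂ) *
        (depolN p (U i * ρ * (U i)ᴴ) * depolN p (U i * ρ * (U i)ᴴ)).trace
      = ((2 : ℂ) ^ n)⁻¹ +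
        ((ρ * ρ).trace - ((2 : ℂ) ^ n)⁻¹) * ((4 : ℂ) ^ n - 1)⁻¹ *
          ∑ k ∈ Finset.Icc 1 n, (n.choose k : ℂ) * 3 ^ k * (p : ℂ) ^ (2 * k) := by
  have hmixC : ∀ P Q, ∑ i ∈ Finset.univ.filter (fun i => π i P = Q), (q i : ℂ)
      = ((4 : ℂ) ^ n - 1)⁻¹ :=
    fun P Q => by rw [← one_div]; exact_mod_cast hmix P Q
  have havg := sum_mul_pauliCoeff_conj_sq _ hU hε hconj hmixC ρ
  have hpurity : ∀ i, (depolN p (U i * ρ * (U i)ᴴ) * depolN p (U i * ρ * (U i)ᴴ)).trace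
      = ((2 : ℂ) ^ n)⁻¹ * (1 + ∑ Q : {P : Fin n → Fin 4 // P ≠ 0},
          (p : ℂ) ^ (2 * pweight Q.1) * pauliCoeff Q.1 (U i * ρ * (U i)ᴴ) ^ 2) := fun i => by
    rw [eq_inv_mul_iff_mul_eq₀ (pow_ne_zero n two_ne_zero), two_pow_mul_trace_depolN_mul_self,
      trace_conj_unitary (hU i), htr, one_pow]
  have hweights : ∑ Q : {P : Fin n → Fin 4 // P ≠ 0}, (p : ℂ) ^ (2 * pweight Q.1)
      = ∑ k ∈ Finset.Icc 1 n, (n.choose k : ℂ) * 3 ^ k * (p : ℂ) ^ (2 * k) := by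
    simp_rw [pow_mul]
    exact sum_pow_pweight_ne_zero _
  calc _ = ((2 : ℂ) ^ n)⁻¹ * (∑ i, (q i : ℂ) + ∑ Q : {P : Fin n → Fin 4 // P ≠ 0},
          (p : ℂ) ^ (2 * pweight Q.1) *
            ∑ i, (q i : ℂ) * pauliCoeff Q.1 (U i * ρ * (U i)ᴴ) ^ 2) := by
        simp only [hpurity, Finset.mul_sum, mul_add, Finset.sum_add_distrib]
        rw [Finset.sum_comm]
        congr 1
        · exact Finset.sum_congr rfl fun i _ => by ring
        · exact Finset.sum_congr rfl fun Q _ => Finset.sum_congr rfl fun i _ => by ring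
    _ = _ := by
        have hqsumC : ∑ i, (q i : ℂ) = 1 := by exact_mod_cast hqsum
        simp only [havg, hqsumC, htr, ← Finset.sum_mul, hweights]
        field_simp

/-- for a Pauli-mixing ensemble `{(qᵢ, Uᵢ)}` and any n-qubit density matrix ρ, the
expected purity of the ensemble after one layer of local depolarizing noise is exactly
`2^{-n} + (Tr(ρ²) − 2^{-n}) · (4^n − 1)⁻¹ · Σ_{k=1}^n C(n,k) 3^k p^{2k}`. -/
theorem expected_purity_pauli_mixing_ensemble
    {n : ℕ} (hn : 1 ≤ n) (p : ℝ) {I : Type} [Fintype I]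
    (q : I → ℝ) (U : I → Matrix (Fin n → Fin 2) (Fin n → Fin 2) ℂ)
    (hq : ∀ i, 0 ≤ q i) (hqsum : ∑ i, q i = 1)
    (hU : ∀ i, U i ∈ Matrix.unitaryGroup (Fin n → Fin 2) ℂ)
    -- Pauli mixing: each Uᵢ conjugates every non-identity Pauli string to a signed
    -- non-identity Pauli string via a permutation πᵢ and signs εᵢ ∈ {±1}, ...
    (π : I → Equiv.Perm {P : Fin n → Fin 4 // P ≠ 0})
    (ε : I → {P : Fin n → Fin 4 // P ≠ 0} → ℝ)
    (hε : ∀ i P, ε i P = 1 ∨ ε i P = -1)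
    (hconj : ∀ i (P : {P : Fin n → Fin 4 // P ≠ 0}),
      U i * pauliMatrix P.1 * (U i)ᴴ = (ε i P : ℂ) • pauliMatrix ((π i) P).1)
    -- ... and each non-identity Pauli is mapped to each non-identity Pauli with total
    -- probability 1/(4^n − 1).
    (hmix : ∀ P Q : {P : Fin n → Fin 4 // P ≠ 0},
      ∑ i ∈ Finset.univ.filter (fun i => π i P = Q), q i = 1 / (4 ^ n - 1))
    -- ρ is an n-qubit density matrix:
    (ρ : Matrix (Fin n → Fin 2) (Fin n → Fin 2) ℂ)
    (hherm : ρ.IsHermitian) (hpos : ρ.PosSemidef) (htr : ρ.trace = 1) :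
    ∑ i, (q i : ℂ) *
        (depolN p (U i * ρ * (U i)ᴴ) * depolN p (U i * ρ * (U i)ᴴ)).trace
      = ((2 : ℂ) ^ n)⁻¹ +
        ((ρ * ρ).trace - ((2 : ℂ) ^ n)⁻¹) * ((4 : ℂ) ^ n - 1)⁻¹ *
          ∑ k ∈ Finset.Icc 1 n, (n.choose k : ℂ) * 3 ^ k * (p : ℂ) ^ (2 * k) :=
  expected_purity_pauli_mixing_ensemble_general p q U hqsum hU π ε hε hconj hmix ρ htr
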